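/- arXiv:1802.08933 — 5 statements merged into one kernel-verified Lean document; each statement's English description precedes it below -/
import Mathlib

section
/- If y : [0,1] → [-1,1] is absolutely continuous with |y'(t)| ≤ π·√(1 - y(t)²) for a.e. t, and y(0) ≥ 1 - ε with y(1) = -y(0), then sup_{t ∈ [0,1]} |y(t) - cos(πt)| ≤ √(2ε). -/
/-!
Write `y = cos θ` with `θ = arccos ∘ y`. The bound `|y'| ≤ K √(1 - y²)` says that `θ` is
`K`-Lipschitz, so for `K = π` the endpoint values `θ 0 = θ₀ := arccos (y 0)` and `θ 1 = π - θ₀`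
force `|θ t - π t| ≤ θ₀`, whence `|y t - cos (π t)| ≤ √(2 (1 - cos θ₀)) = √(2 (1 - y 0)) ≤ √(2ε)`.

As `arccos` is singular at `±1`, the Lipschitz bound is first proved for `arccos (l * y)` with
`0 ≤ l < 1` by the fencing theorem for right Dini derivatives: `arccos` is strictly
differentiable at `l * y x`, which bounds the Dini derivative by
`K l √(1 - y²) / √(1 - l² y²) ≤ K`. Then let `l → 1`.
-/

open Real MeasureTheory Set Filter Topology

section Primitive

variable {y g : ℝ → ℝ} {a b : ℝ}

lemma continuousOn_of_eq_add_integral (hint : IntervalIntegrable g volume a b)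
    (hy : ∀ t ∈ Icc a b, y t = y a + ∫ s in a..t, g s) : ContinuousOn y (Icc a b) :=
  (continuousOn_const.add ((intervalIntegral.continuousOn_primitive_interval' hint
    left_mem_uIcc).mono Icc_subset_uIcc)).congr hy

lemma sub_eq_integral_of_eq_add_integral (hint : IntervalIntegrable g volume a b)
    (hy : ∀ t ∈ Icc a b, y t = y a + ∫ s in a..t, g s) {s t : ℝ} (hs : s ∈ Icc a b)
    (ht : t ∈ Icc a b) : y t - y s = ∫ u in s..t, g u := by
  have hint_to {u : ℝ} (hu : u ∈ Icc a b) : IntervalIntegrable g volume a u :=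
    hint.mono_set (uIcc_subset_uIcc left_mem_uIcc (Icc_subset_uIcc hu))
  rw [hy t ht, hy s hs, add_sub_add_left_eq_sub,
    intervalIntegral.integral_interval_sub_left (hint_to ht) (hint_to hs)]

lemma abs_sub_le_of_eq_add_integral (hint : IntervalIntegrable g volume a b)
    (hy : ∀ t ∈ Icc a b, y t = y a + ∫ s in a..t, g s) {s t C : ℝ} (hs : s ∈ Icc a b)
    (ht : t ∈ Icc a b) (hst : s ≤ t) (hC : ∀ᵐ u, u ∈ Ioc s t → |g u| ≤ C) :
    |y t - y s| ≤ C * (t - s) := by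
  have hC' : ∀ᵐ u, u ∈ uIoc s t → ‖g u‖ ≤ C := by
    simpa only [uIoc_of_le hst, Real.norm_eq_abs] using hC
  simpa only [sub_eq_integral_of_eq_add_integral hint hy hs ht, Real.norm_eq_abs,
    abs_of_nonneg (sub_nonneg.2 hst)] using
    intervalIntegral.norm_integral_le_of_norm_le_const_ae hC'

end Primitive

lemma eventually_nhdsGT_forall_Icc {P : ℝ → Prop} {a b x : ℝ} (hx : x ∈ Ico a b)
    (h : ∀ᶠ s in 𝓝[Icc a b] x, P s) : ∀ᶠ z in 𝓝[>] x, ∀ s ∈ Icc x z, P s := by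
  obtain ⟨u, hxu, hsub⟩ :=
    mem_nhdsGE_iff_exists_Ico_subset.1 (nhdsWithin_le_of_mem (Icc_mem_nhdsGE_of_mem hx) h)
  filter_upwards [Ioo_mem_nhdsGT hxu] with z hz s hs using hsub ⟨hs.1, hs.2.trans_lt hz.2⟩

lemma abs_cos_sub_cos_le_sqrt (X Y : ℝ) : |cos X - cos Y| ≤ √(2 * (1 - cos (X - Y))) := by
  apply le_sqrt_of_sq_le
  rw [sq_abs, cos_sub]
  nlinarith [sq_nonneg (sin X - sin Y), sin_sq_add_cos_sq X, sin_sq_add_cos_sq Y]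

lemma exists_lipschitzOnWith_arccos {u κ : ℝ} (hu : |u| < 1) (hκ : 1 / √(1 - u ^ 2) < κ) :
    ∃ U ∈ 𝓝 u, LipschitzOnWith κ.toNNReal arccos U := by
  refine (hasStrictDerivAt_arccos (by grind [abs_lt]) (by grind [abs_lt])).hasStrictFDerivAt
    |>.exists_lipschitzOnWith_of_nnnorm_lt _ ?_
  have hκ0 : 0 ≤ κ := (one_div_nonneg.2 (sqrt_nonneg _)).trans hκ.le
  rwa [← NNReal.coe_lt_coe, coe_nnnorm, ContinuousLinearMap.norm_toSpanSingleton,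
    coe_toNNReal _ hκ0, norm_neg, Real.norm_of_nonneg (by positivity)]

section ArccosLipschitz

variable {y g : ℝ → ℝ} {a b K : ℝ}

lemma eventually_abs_sub_le_of_sqrt_lt (hK : 0 ≤ K) (hint : IntervalIntegrable g volume a b)
    (hy : ∀ t ∈ Icc a b, y t = y a + ∫ s in a..t, g s)
    (hbound : ∀ᵐ t, t ∈ Icc a b → |g t| ≤ K * √(1 - y t ^ 2)) {x M : ℝ} (hx : x ∈ Ico a b)
    (hM : √(1 - y x ^ 2) < M) : ∀ᶠ z in 𝓝[>] x, |y z - y x| ≤ K * M * (z - x) := by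
  have hcont : ContinuousWithinAt (fun t => √(1 - y t ^ 2)) (Icc a b) x :=
    (((continuousOn_of_eq_add_integral hint hy) x (Ico_subset_Icc_self hx)).pow 2).const_sub
      1 |>.sqrt
  have hnear := eventually_nhdsGT_forall_Icc hx
    ((hcont.eventually_lt_const hM).and self_mem_nhdsWithin)
  filter_upwards [hnear, self_mem_nhdsWithin] with z hz hxz
  refine abs_sub_le_of_eq_add_integral hint hy (Ico_subset_Icc_self hx)
    (hz z ⟨le_of_lt hxz, le_rfl⟩).2 (le_of_lt hxz) ?_
  filter_upwards [hbound] with u hu hu'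
  obtain ⟨hlt, hab⟩ := hz u (Ioc_subset_Icc_self hu')
  calc |g u| ≤ K * √(1 - y u ^ 2) := hu hab
    _ ≤ K * M := by gcongr

lemma eventually_slope_arccos_mul_lt (hK : 0 ≤ K) (hint : IntervalIntegrable g volume a b)
    (hy : ∀ t ∈ Icc a b, y t = y a + ∫ s in a..t, g s)
    (hrange : ∀ t ∈ Icc a b, y t ∈ Icc (-1 : ℝ) 1)
    (hbound : ∀ᵐ t, t ∈ Icc a b → |g t| ≤ K * √(1 - y t ^ 2)) {l : ℝ} (hl0 : 0 ≤ l)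
    (hl1 : l < 1) {x r : ℝ} (hx : x ∈ Ico a b) (hr : K < r) :
    ∀ᶠ z in 𝓝[>] x, slope (fun t => arccos (l * y t)) x z < r := by
  have hyx := hrange x (Ico_subset_Icc_self hx)
  set A := √(1 - y x ^ 2)
  set B := √(1 - (l * y x) ^ 2)
  have hlyx : |l * y x| < 1 := by
    rw [abs_mul, abs_of_nonneg hl0]
    exact mul_lt_one_of_nonneg_of_lt_one_left hl0 hl1 (abs_le.2 hyx)
  have hB : 0 < B := sqrt_pos.2 (by nlinarith [sq_lt_one_iff_abs_lt_one (l * y x) |>.2 hlyx])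
  have hlAB : l * A ≤ B := by
    rw [← sqrt_sq hl0, ← sqrt_mul (sq_nonneg l)]
    exact sqrt_le_sqrt (by nlinarith [sq_nonneg (y x)])
  -- `(1 + τ) / B` is a Lipschitz constant of `arccos` near `l * y x` and `A + τ` bounds
  -- `√(1 - y ^ 2)` near `x`; at `τ = 0` their product with `l * K` is at most `K`.
  obtain ⟨τ, hτr, hτ⟩ : ∃ τ, (1 + τ) / B * l * (K * (A + τ)) < r ∧ 0 < τ := by
    have hcont : Continuous fun τ : ℝ => (1 + τ) / B * l * (K * (A + τ)) := by fun_prop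
    have h0 : (1 + 0) / B * l * (K * (A + 0)) < r :=
      calc _ = K * (l * A / B) := by ring
        _ ≤ K * 1 := by gcongr; rwa [div_le_one hB]
        _ < r := by linarith
    exact (((hcont.tendsto 0).eventually_lt_const h0).filter_mono nhdsWithin_le_nhds |>.and
      (self_mem_nhdsWithin : Ioi (0 : ℝ) ∈ 𝓝[>] 0)).exists
  obtain ⟨U, hU, hlip⟩ := exists_lipschitzOnWith_arccos hlyx
    (κ := (1 + τ) / B) (by gcongr; linarith)
  have hyU : ∀ᶠ z in 𝓝[>] x, l * y z ∈ U :=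
    nhdsWithin_le_of_mem (Icc_mem_nhdsGT_of_mem hx) <|
      (continuousWithinAt_const.mul ((continuousOn_of_eq_add_integral hint hy) x
        (Ico_subset_Icc_self hx))).eventually_mem hU
  filter_upwards [eventually_abs_sub_le_of_sqrt_lt hK hint hy hbound hx
    (lt_add_of_pos_right A hτ), hyU, self_mem_nhdsWithin] with z hz hzU hxz
  rw [slope_def_field, div_lt_iff₀ (sub_pos.2 hxz)]
  have hdist := hlip.dist_le_mul _ hzU _ (mem_of_mem_nhds hU)
  rw [coe_toNNReal _ (by positivity), dist_eq, dist_eq, ← mul_sub, abs_mul,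
    abs_of_nonneg hl0] at hdist
  calc arccos (l * y z) - arccos (l * y x) ≤ (1 + τ) / B * (l * |y z - y x|) :=
        (le_abs_self _).trans hdist
    _ ≤ (1 + τ) / B * (l * (K * (A + τ) * (z - x))) := by gcongr
    _ = (1 + τ) / B * l * (K * (A + τ)) * (z - x) := by ring
    _ < r * (z - x) := mul_lt_mul_of_pos_right hτr (sub_pos.2 hxz)

lemma arccos_mul_le_arccos_mul_add (hK : 0 ≤ K) (hint : IntervalIntegrable g volume a b)
    (hy : ∀ t ∈ Icc a b, y t = y a + ∫ s in a..t, g s)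
    (hrange : ∀ t ∈ Icc a b, y t ∈ Icc (-1 : ℝ) 1)
    (hbound : ∀ᵐ t, t ∈ Icc a b → |g t| ≤ K * √(1 - y t ^ 2)) {l : ℝ} (hl0 : 0 ≤ l)
    (hl1 : l < 1) {s t : ℝ} (hs : s ∈ Icc a b) (ht : t ∈ Icc a b) (hst : s ≤ t) :
    arccos (l * y t) ≤ arccos (l * y s) + K * (t - s) := by
  refine image_le_of_liminf_slope_right_le_deriv_boundary (f := fun u => arccos (l * y u))
    (B := fun u => arccos (l * y s) + K * (u - s)) (B' := fun _ => K) ?_ (by simp) (by fun_prop)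
    (fun x _ => ?_) (fun x hx r hr => ?_) ⟨hst, le_rfl⟩
  · exact continuous_arccos.comp_continuousOn (continuousOn_const.mul
      ((continuousOn_of_eq_add_integral hint hy).mono (Icc_subset_Icc hs.1 ht.2)))
  · simpa using ((((hasDerivAt_id x).sub_const s).const_mul K).const_add
      (arccos (l * y s))).hasDerivWithinAt (s := Ici x)
  · exact (eventually_slope_arccos_mul_lt hK hint hy hrange hbound hl0 hl1
      ⟨hs.1.trans hx.1, hx.2.trans_le ht.2⟩ hr).frequently

lemma arccos_le_arccos_add (hK : 0 ≤ K) (hint : IntervalIntegrable g volume a b)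
    (hy : ∀ t ∈ Icc a b, y t = y a + ∫ s in a..t, g s)
    (hrange : ∀ t ∈ Icc a b, y t ∈ Icc (-1 : ℝ) 1)
    (hbound : ∀ᵐ t, t ∈ Icc a b → |g t| ≤ K * √(1 - y t ^ 2)) {s t : ℝ} (hs : s ∈ Icc a b)
    (ht : t ∈ Icc a b) (hst : s ≤ t) : arccos (y t) ≤ arccos (y s) + K * (t - s) := by
  have hcont : Continuous fun l : ℝ => arccos (l * y t) - arccos (l * y s) := by fun_prop
  have hlim := ((hcont.tendsto 1).mono_left (nhdsWithin_le_nhds (s := Iio 1)))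
  simp only [one_mul] at hlim
  have := le_of_tendsto (b := K * (t - s)) hlim <| by
    filter_upwards [Ioo_mem_nhdsLT zero_lt_one] with l hl
    linarith [arccos_mul_le_arccos_mul_add hK hint hy hrange hbound hl.1.le hl.2 hs ht hst]
  linarith

end ArccosLipschitz

theorem stmt_1_general (ε : ℝ) (y g : ℝ → ℝ)
    (hrange : ∀ t ∈ Icc (0:ℝ) 1, y t ∈ Icc (-1:ℝ) 1)
    (hint : IntervalIntegrable g volume 0 1)
    (hAC : ∀ t ∈ Icc (0:ℝ) 1, y t = y 0 + ∫ s in (0:ℝ)..t, g s)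
    (hbound : ∀ᵐ t ∂(volume : Measure ℝ), t ∈ Icc (0:ℝ) 1 →
      |g t| ≤ π * Real.sqrt (1 - (y t) ^ 2))
    (h0 : 1 - ε ≤ y 0) (h1 : y 1 = -(y 0)) :
    ∀ t ∈ Icc (0:ℝ) 1, |y t - Real.cos (π * t)| ≤ Real.sqrt (2 * ε) := by
  intro t ht
  have hlip {s u : ℝ} (hs : s ∈ Icc (0 : ℝ) 1) (hu : u ∈ Icc (0 : ℝ) 1) (hsu : s ≤ u) :=
    arccos_le_arccos_add pi_pos.le hint hAC hrange hbound hs hu hsu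
  have hupper : arccos (y t) ≤ arccos (y 0) + π * t := by
    simpa using hlip (left_mem_Icc.2 zero_le_one) ht ht.1
  have hlower : π - arccos (y 0) ≤ arccos (y t) + π * (1 - t) := by
    simpa only [h1, arccos_neg] using hlip ht (right_mem_Icc.2 zero_le_one) ht.2
  obtain ⟨hy0, hy0'⟩ := hrange 0 (left_mem_Icc.2 zero_le_one)
  obtain ⟨hyt, hyt'⟩ := hrange t ht
  calc |y t - cos (π * t)| = |cos (arccos (y t)) - cos (π * t)| := by rw [cos_arccos hyt hyt']
    _ ≤ √(2 * (1 - cos (arccos (y t) - π * t))) := abs_cos_sub_cos_le_sqrt _ _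
    _ ≤ √(2 * (1 - cos (arccos (y 0)))) := by
        gcongr
        rw [← cos_abs (arccos (y t) - π * t)]
        exact cos_le_cos_of_nonneg_of_le_pi (abs_nonneg _) (arccos_le_pi _)
          (abs_le.2 ⟨by linarith, by linarith⟩)
    _ ≤ √(2 * ε) := by
        rw [cos_arccos hy0 hy0']
        gcongr
        linarith

theorem stmt_1 (ε : ℝ) (hε : 0 < ε) (y g : ℝ → ℝ)
    (hrange : ∀ t ∈ Icc (0:ℝ) 1, y t ∈ Icc (-1:ℝ) 1)
    (hint : IntervalIntegrable g volume 0 1)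
    (hAC : ∀ t ∈ Icc (0:ℝ) 1, y t = y 0 + ∫ s in (0:ℝ)..t, g s)
    (hbound : ∀ᵐ t ∂(volume : Measure ℝ), t ∈ Icc (0:ℝ) 1 →
      |g t| ≤ π * Real.sqrt (1 - (y t) ^ 2))
    (h0 : 1 - ε ≤ y 0) (h1 : y 1 = -(y 0)) :
    ∀ t ∈ Icc (0:ℝ) 1, |y t - Real.cos (π * t)| ≤ Real.sqrt (2 * ε) :=
  stmt_1_general ε y g hrange hint hAC hbound h0 h1
end

section
/- Let U : ℤ × [0,∞) → ℤ be a swap function (for each t, U(·,t) is a bijection of ℤ; for each x, U(x,·) is cadlag with jumps ±1; swaps are exchanges of adjacent values). If particle x has crossed a line L(t) = qt + x by time t but has not swapped with particle x₀, or has swapped with x₀ but not crossed L, then the number of such particles at time t is less than |U(x₀, t) - L(t)| + 1. -/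
/-!
Write `σ = U(·, t)`, `p = σ x₀` and `ℓ = L(t)`. Particle `x₀` starts on the line, so a particle
`x ≠ x₀` has crossed `L` exactly when it ends on the other side of `ℓ`, and has swapped with `x₀`
exactly when it ends on the other side of `p`. If these two statuses differ, `σ x` must therefore
lie between `ℓ` and `p`; as `σ` is injective, the particles concerned are at most as many as the
integers in the half-open interval between `ℓ` and `p`, of which there are fewer than `|p - ℓ| + 1`.
-/

open Set
open scoped symmDiff

namespace SwapFunction

def integersBetween (p : ℤ) (ℓ : ℝ) : Set ℤ :=
  {m | (ℓ < m ∧ m ≤ p) ∨ (p < m ∧ (m : ℝ) ≤ ℓ)}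

theorem integersBetween_eq (p : ℤ) (ℓ : ℝ) :
    integersBetween p ℓ = ↑(Finset.Ioc ⌊ℓ⌋ p ∪ Finset.Ioc p ⌊ℓ⌋) := by
  ext m
  simp only [integersBetween, Finset.coe_union, Finset.coe_Ioc, mem_union, mem_Ioc, mem_ofPred_eq,
    Int.floor_lt, Int.le_floor]

theorem finite_integersBetween (p : ℤ) (ℓ : ℝ) : (integersBetween p ℓ).Finite := by
  rw [integersBetween_eq]
  exact Finset.finite_toSet _

theorem ncard_integersBetween_lt (p : ℤ) (ℓ : ℝ) :
    ((integersBetween p ℓ).ncard : ℝ) < |(p : ℝ) - ℓ| + 1 := by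
  have hcard : (integersBetween p ℓ).ncard ≤ (p - ⌊ℓ⌋).natAbs := by
    rw [integersBetween_eq, ncard_coe_finset]
    have := Finset.card_union_le (Finset.Ioc ⌊ℓ⌋ p) (Finset.Ioc p ⌊ℓ⌋)
    rw [Int.card_Ioc, Int.card_Ioc] at this
    omega
  have hfloor : |((p - ⌊ℓ⌋ : ℤ) : ℝ)| < |(p : ℝ) - ℓ| + 1 := by
    have := Int.floor_le ℓ
    have := Int.sub_one_lt_floor ℓ
    push_cast
    rw [abs_lt]
    constructor <;> cases abs_cases ((p : ℝ) - ℓ) <;> linarith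
  calc ((integersBetween p ℓ).ncard : ℝ) ≤ ((p - ⌊ℓ⌋).natAbs : ℝ) := by exact_mod_cast hcard
    _ = |((p - ⌊ℓ⌋ : ℤ) : ℝ)| := by rw [Nat.cast_natAbs, Int.cast_abs]
    _ < |(p : ℝ) - ℓ| + 1 := hfloor

/-- Particle `x` moves from `x` to `σ x` while the line moves from `c` to `ℓ`. -/
def Crossed (σ : ℤ → ℤ) (c ℓ : ℝ) (x : ℤ) : Prop :=
  ((x : ℝ) ≤ c ∧ ℓ < σ x) ∨ (c < x ∧ (σ x : ℝ) ≤ ℓ)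

def Swapped (σ : ℤ → ℤ) (x₀ x : ℤ) : Prop :=
  (x < x₀ ∧ σ x₀ < σ x) ∨ (x₀ < x ∧ σ x < σ x₀)

variable {σ : ℤ → ℤ} {x₀ : ℤ} {ℓ : ℝ}

theorem mem_integersBetween_of_mem_symmDiff (hσ : σ.Injective) {x : ℤ}
    (hx : x ∈ {x | Crossed σ x₀ ℓ x} ∆ {x | Swapped σ x₀ x}) :
    σ x ∈ integersBetween (σ x₀) ℓ := by
  simp only [mem_symmDiff, mem_ofPred_eq, Crossed, Swapped, not_or, not_and, not_lt,
    not_le, Int.cast_le, Int.cast_lt] at hx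
  simp only [integersBetween, mem_ofPred_eq]
  rcases hx with ⟨hc | hc, hs₁, hs₂⟩ | ⟨hs | hs, hc₁, hc₂⟩
  · rcases hc.1.lt_or_eq with h | rfl
    · exact Or.inl ⟨hc.2, hs₁ h⟩
    · exact Or.inl ⟨hc.2, le_rfl⟩
  · exact Or.inr ⟨lt_of_le_of_ne (hs₂ hc.1) (hσ.ne hc.1.ne').symm, hc.2⟩
  · exact Or.inr ⟨hs.2, hc₁ hs.1.le⟩
  · exact Or.inl ⟨hc₂ hs.1, hs.2.le⟩

theorem finite_symmDiff_crossed_swapped (hσ : σ.Injective) :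
    ({x | Crossed σ x₀ ℓ x} ∆ {x | Swapped σ x₀ x}).Finite :=
  .of_injOn (fun _ hx => mem_integersBetween_of_mem_symmDiff hσ hx) hσ.injOn
    (finite_integersBetween _ _)

theorem ncard_symmDiff_crossed_swapped_lt (hσ : σ.Injective) :
    (({x | Crossed σ x₀ ℓ x} ∆ {x | Swapped σ x₀ x}).ncard : ℝ) < |(σ x₀ : ℝ) - ℓ| + 1 :=
  calc _ ≤ ((integersBetween (σ x₀) ℓ).ncard : ℝ) := by
        exact_mod_cast ncard_le_ncard_of_injOn σ
          (fun _ hx => mem_integersBetween_of_mem_symmDiff hσ hx) hσ.injOn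
          (finite_integersBetween _ _)
    _ < _ := ncard_integersBetween_lt _ _

end SwapFunction

open SwapFunction in
theorem stmt_12_general (U : ℤ → ℝ → ℤ) (x₀ : ℤ) (q t : ℝ)
    (hbij : ∀ s : ℝ, Function.Bijective (fun x => U x s))
    (h0 : ∀ x : ℤ, U x 0 = x) :
    letI L : ℝ → ℝ := fun s => q * s + (x₀ : ℝ)
    letI crossed : ℤ → Prop := fun x =>
      ((U x 0 : ℝ) ≤ L 0 ∧ (U x t : ℝ) > L t) ∨ ((U x 0 : ℝ) > L 0 ∧ (U x t : ℝ) ≤ L t)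
    letI swapped : ℤ → Prop := fun x =>
      (U x 0 < U x₀ 0 ∧ U x t > U x₀ t) ∨ (U x 0 > U x₀ 0 ∧ U x t < U x₀ t)
    letI A : Set ℤ := {x | (crossed x ∧ ¬ swapped x) ∨ (swapped x ∧ ¬ crossed x)}
    A.Finite ∧ (A.ncard : ℝ) < |(U x₀ t : ℝ) - L t| + 1 := by
  have hinj : (fun x => U x t).Injective := (hbij t).1
  simp only [h0, mul_zero, zero_add]
  -- `A` is now, up to unfolding, the symmetric difference of the crossed and the swapped particles.
  exact ⟨finite_symmDiff_crossed_swapped hinj, ncard_symmDiff_crossed_swapped_lt hinj⟩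

/-- `stmt_12`: in a swap function `U` (particles labelled by their initial positions,
`U(·,s)` a bijection of `ℤ` at each time), the number of particles whose status of
"crossed the line `L(s) = q·s + x₀` by time `t`" differs from their status of
"swapped with particle `x₀` by time `t`" is less than `|U(x₀,t) - L(t)| + 1`. -/
theorem stmt_12 (U : ℤ → ℝ → ℤ) (x₀ : ℤ) (q t : ℝ) (ht : 0 ≤ t)
    (hbij : ∀ s : ℝ, Function.Bijective (fun x => U x s))
    (h0 : ∀ x : ℤ, U x 0 = x) :
    letI L : ℝ → ℝ := fun s => q * s + (x₀ : ℝ)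
    letI crossed : ℤ → Prop := fun x =>
      ((U x 0 : ℝ) ≤ L 0 ∧ (U x t : ℝ) > L t) ∨ ((U x 0 : ℝ) > L 0 ∧ (U x t : ℝ) ≤ L t)
    letI swapped : ℤ → Prop := fun x =>
      (U x 0 < U x₀ 0 ∧ U x t > U x₀ t) ∨ (U x 0 > U x₀ 0 ∧ U x t < U x₀ t)
    letI A : Set ℤ := {x | (crossed x ∧ ¬ swapped x) ∨ (swapped x ∧ ¬ crossed x)}
    A.Finite ∧ (A.ncard : ℝ) < |(U x₀ t : ℝ) - L t| + 1 :=
  stmt_12_general U x₀ q t hbij h0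
end

section
/- Suppose f : [0,1] → ℝ is continuous and for all rational p < q in [0,1] and all k ∈ ℕ, |f(q) - f(p)|/(q - p) ≤ π·√(1 - m(p,q)²) + 1/k, where m(p,q) = inf{|f(t)| : t ∈ [p,q]}. Then f is absolutely continuous and |f'(t)| ≤ π·√(1 - f(t)²) for almost every t. -/
open Real MeasureTheory Set

/-!
Since `√(1 - m²) ≤ 1` and the `1/k` slack is arbitrary, `f` is `π`-Lipschitz on the rational
points of `[0, 1]`, hence by continuity on all of `[0, 1]`; so it is absolutely continuous and is
the integral of its a.e. defined derivative `g = f'`. At an interior point `x` where `f` is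
differentiable, `f'(x)` is squeezed by difference quotients over rational intervals `p < x < q`
shrinking to `x`, and on these `m(p, q) → |f x|` by continuity, which gives
`|f'(x)| ≤ π √(1 - f(x)²)`.
-/

noncomputable def infAbsOn (f : ℝ → ℝ) (a b : ℝ) : ℝ := sInf ((fun t => |f t|) '' Icc a b)

lemma abs_infAbsOn_sub_le {f : ℝ → ℝ} {a b x η : ℝ} (hx : x ∈ Icc a b)
    (h : ∀ s ∈ Icc a b, |f s - f x| ≤ η) : dist (infAbsOn f a b) |f x| ≤ η := by
  rw [Real.dist_eq, abs_sub_le_iff]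
  constructor
  · have : infAbsOn f a b ≤ |f x| :=
      csInf_le ⟨0, by rintro _ ⟨s, -, rfl⟩; exact abs_nonneg _⟩ (mem_image_of_mem _ hx)
    linarith [abs_nonneg η, (abs_nonneg _).trans (h x hx)]
  · have : |f x| - η ≤ infAbsOn f a b := by
      refine le_csInf (Nonempty.image _ ⟨x, hx⟩) ?_
      rintro _ ⟨s, hs, rfl⟩
      linarith [h s hs, abs_sub_abs_le_abs_sub (f x) (f s), abs_sub_comm (f x) (f s)]
    linarith

lemma le_of_forall_le_add_one_div {a b : ℝ} (h : ∀ k : ℕ, 0 < k → a ≤ b + 1 / k) : a ≤ b := by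
  refine le_of_forall_pos_le_add fun ε hε => ?_
  obtain ⟨n, hn⟩ := exists_nat_one_div_lt hε
  calc a ≤ b + 1 / (n + 1 : ℕ) := h (n + 1) n.succ_pos
    _ ≤ b + ε := by push_cast; linarith

lemma lipschitzOnWith_Icc_of_forall_rat {f : ℝ → ℝ} {a b : ℝ} {K : NNReal} (hab : a < b)
    (hf : ContinuousOn f (Icc a b))
    (h : ∀ p q : ℚ, (p : ℝ) ∈ Icc a b → (q : ℝ) ∈ Icc a b → (p : ℝ) < q →
      |f q - f p| ≤ K * (q - p)) :
    LipschitzOnWith K f (Icc a b) := by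
  set D := Ioo a b ∩ range ((↑) : ℚ → ℝ)
  have hD : closure D = Icc a b := by
    refine (closure_minimal (inter_subset_left.trans Ioo_subset_Icc_self) isClosed_Icc).antisymm ?_
    rw [← closure_Ioo hab.ne]
    exact closure_minimal (Rat.denseRange_cast.open_subset_closure_inter isOpen_Ioo)
      isClosed_closure
  have hrat : ∀ z ∈ D ×ˢ D, dist (f z.1) (f z.2) ≤ K * dist z.1 z.2 := by
    rintro ⟨x, y⟩ ⟨⟨hx, p, rfl⟩, ⟨hy, q, rfl⟩⟩
    rw [Real.dist_eq, Real.dist_eq]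
    rcases lt_trichotomy (p : ℝ) q with hpq | hpq | hpq
    · rw [abs_sub_comm, abs_sub_comm (p : ℝ), abs_of_pos (sub_pos.2 hpq)]
      exact h p q (Ioo_subset_Icc_self hx) (Ioo_subset_Icc_self hy) hpq
    · simp [hpq]
    · rw [abs_of_pos (sub_pos.2 hpq)]
      exact h q p (Ioo_subset_Icc_self hy) (Ioo_subset_Icc_self hx) hpq
  have hcl : closure (D ×ˢ D) = Icc a b ×ˢ Icc a b := by rw [closure_prod_eq, hD]
  refine LipschitzOnWith.of_dist_le_mul fun x hx y hy => ?_
  refine le_on_closure (f := fun z : ℝ × ℝ => dist (f z.1) (f z.2)) hrat ?_ ?_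
    (hcl ▸ ⟨hx, hy⟩ : (x, y) ∈ closure (D ×ˢ D))
  · rw [hcl]
    exact continuous_dist.comp_continuousOn
      ((hf.comp continuousOn_fst fun _ hz => hz.1).prodMk
        (hf.comp continuousOn_snd fun _ hz => hz.2))
  · exact (continuous_const.mul (continuous_fst.dist continuous_snd)).continuousOn

lemma HasDerivAt.abs_le_of_forall_straddle {F : ℝ → ℝ} {d x c : ℝ} (hF : HasDerivAt F d x)
    (h : ∀ δ > 0, ∃ p q : ℝ, x - δ < p ∧ p < x ∧ x < q ∧ q < x + δ ∧
      |F q - F p| ≤ c * (q - p)) :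
    |d| ≤ c := by
  refine le_of_forall_pos_le_add fun ε hε => ?_
  obtain ⟨δ, hδ, hlin⟩ := Metric.eventually_nhds_iff.1 ((hasDerivAt_iff_isLittleO.1 hF).def hε)
  obtain ⟨p, q, hp, hpx, hxq, hq, hslope⟩ := h δ hδ
  have hlinp := hlin (show dist p x < δ by rw [Real.dist_eq, abs_lt]; constructor <;> linarith)
  have hlinq := hlin (show dist q x < δ by rw [Real.dist_eq, abs_lt]; constructor <;> linarith)
  simp only [Real.norm_eq_abs, smul_eq_mul, abs_of_neg (sub_neg.2 hpx),
    abs_of_pos (sub_pos.2 hxq)] at hlinp hlinq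
  have hpq : 0 < q - p := by linarith
  have : |d| * (q - p) ≤ (c + ε) * (q - p) := by
    rw [← abs_of_pos hpq, ← abs_mul, abs_of_pos hpq]
    calc |d * (q - p)|
        = |(F q - F p) - (F q - F x - (q - x) * d) + (F p - F x - (p - x) * d)| := by ring_nf
      _ ≤ |F q - F p| + |F q - F x - (q - x) * d| + |F p - F x - (p - x) * d| :=
          (abs_add_le _ _).trans (by gcongr; exact abs_sub _ _)
      _ ≤ (c + ε) * (q - p) := by nlinarith
  exact le_of_mul_le_mul_right this hpq

lemma abs_le_of_hasDerivAt_of_slope_le_infAbsOn {f φ : ℝ → ℝ} {a b x d : ℝ} (hx : x ∈ Ioo a b)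
    (hf : ContinuousAt f x) (hφ : ContinuousAt φ |f x|)
    (hslope : ∀ p q : ℚ, (p : ℝ) ∈ Icc a b → (q : ℝ) ∈ Icc a b → (p : ℝ) < q →
      |f q - f p| ≤ φ (infAbsOn f p q) * (q - p))
    (hd : HasDerivAt f d x) :
    |d| ≤ φ |f x| := by
  refine le_of_forall_pos_le_add fun ε hε => hd.abs_le_of_forall_straddle fun δ hδ => ?_
  obtain ⟨η, hη, hφη⟩ := Metric.continuousAt_iff.1 hφ ε hε
  obtain ⟨δ₀, hδ₀, hfδ₀⟩ := Metric.continuousAt_iff.1 hf (η / 2) (half_pos hη)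
  set r := min δ (min δ₀ (min (x - a) (b - x)))
  have hr : 0 < r := lt_min hδ (lt_min hδ₀ (lt_min (sub_pos.2 hx.1) (sub_pos.2 hx.2)))
  obtain ⟨hrδ, hrδ₀, hra, hrb⟩ : r ≤ δ ∧ r ≤ δ₀ ∧ r ≤ x - a ∧ r ≤ b - x := by simp [r]
  obtain ⟨p, hp, hpx⟩ := exists_rat_btwn (sub_lt_self x hr)
  obtain ⟨q, hxq, hq⟩ := exists_rat_btwn (lt_add_of_pos_right x hr)
  refine ⟨p, q, by linarith, hpx, hxq, by linarith, ?_⟩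
  have hnear : ∀ s ∈ Icc (p : ℝ) q, |f s - f x| ≤ η / 2 := fun s hs => by
    refine (hfδ₀ ?_).le
    rw [Real.dist_eq, abs_lt]
    constructor <;> linarith [hs.1, hs.2]
  have hinf : dist (infAbsOn f p q) |f x| < η :=
    (abs_infAbsOn_sub_le ⟨hpx.le, hxq.le⟩ hnear).trans_lt (half_lt_self hη)
  have hφinf : φ (infAbsOn f p q) ≤ φ |f x| + ε := by
    linarith [(abs_sub_lt_iff.1 (hφη hinf)).1]
  calc |f q - f p| ≤ φ (infAbsOn f p q) * (q - p) :=
        hslope p q ⟨by linarith, by linarith⟩ ⟨by linarith, by linarith⟩ (hpx.trans hxq)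
    _ ≤ (φ |f x| + ε) * (q - p) := by gcongr; linarith

theorem stmt_13_general (f : ℝ → ℝ)
    (hcont : ContinuousOn f (Icc (0:ℝ) 1))
    (hdq : ∀ p q : ℚ, (p:ℝ) ∈ Icc (0:ℝ) 1 → (q:ℝ) ∈ Icc (0:ℝ) 1 → (p:ℝ) < q →
      ∀ k : ℕ, 0 < k →
        |f q - f p| / ((q:ℝ) - p) ≤
          π * Real.sqrt (1 - (sInf ((fun t => |f t|) '' Icc (p:ℝ) (q:ℝ))) ^ 2) + 1 / k) :
    ∃ g : ℝ → ℝ, IntervalIntegrable g volume 0 1 ∧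
      (∀ t ∈ Icc (0:ℝ) 1, f t = f 0 + ∫ s in (0:ℝ)..t, g s) ∧
      ∀ᵐ t ∂(volume : Measure ℝ), t ∈ Icc (0:ℝ) 1 →
        |g t| ≤ π * Real.sqrt (1 - (f t) ^ 2) := by
  have hslope : ∀ p q : ℚ, (p : ℝ) ∈ Icc (0 : ℝ) 1 → (q : ℝ) ∈ Icc (0 : ℝ) 1 → (p : ℝ) < q →
      |f q - f p| ≤ π * √(1 - infAbsOn f p q ^ 2) * (q - p) :=
    fun p q hp hq hpq =>
      (div_le_iff₀ (sub_pos.2 hpq)).1 (le_of_forall_le_add_one_div (hdq p q hp hq hpq))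
  have hlip : LipschitzOnWith (Real.toNNReal π) f (Icc 0 1) :=
    lipschitzOnWith_Icc_of_forall_rat zero_lt_one hcont fun p q hp hq hpq =>
      (hslope p q hp hq hpq).trans <| by
        rw [Real.coe_toNNReal π pi_pos.le]
        gcongr
        exact mul_le_of_le_one_right pi_pos.le (sqrt_le_one.2 (by nlinarith))
  have hac : ∀ t ∈ Icc (0 : ℝ) 1, AbsolutelyContinuousOnInterval f 0 t := fun t ht =>
    (hlip.mono (uIcc_subset_Icc (left_mem_Icc.2 zero_le_one) ht)).absolutelyContinuousOnInterval
  refine ⟨deriv f, (hac 1 (right_mem_Icc.2 zero_le_one)).intervalIntegrable_deriv,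
    fun t ht => by rw [(hac t ht).integral_deriv_eq_sub]; ring, ?_⟩
  filter_upwards [(Ioo_ae_eq_Icc (a := (0 : ℝ)) (b := 1)).mem_iff] with x hIoo hIcc
  by_cases hd : DifferentiableAt ℝ f x
  · have hx : x ∈ Ioo (0 : ℝ) 1 := hIoo.2 hIcc
    simpa only [sq_abs] using
      abs_le_of_hasDerivAt_of_slope_le_infAbsOn (φ := fun y => π * √(1 - y ^ 2)) hx
      (hcont.continuousAt (Icc_mem_nhds hx.1 hx.2)) (by fun_prop) hslope hd.hasDerivAt
  · rw [deriv_zero_of_not_differentiableAt hd, abs_zero]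
    positivity

theorem stmt_13 (f : ℝ → ℝ)
    (hcont : ContinuousOn f (Icc (0:ℝ) 1))
    (hrange : ∀ t ∈ Icc (0:ℝ) 1, f t ∈ Icc (-1:ℝ) 1)
    (hdq : ∀ p q : ℚ, (p:ℝ) ∈ Icc (0:ℝ) 1 → (q:ℝ) ∈ Icc (0:ℝ) 1 → (p:ℝ) < q →
      ∀ k : ℕ, 0 < k →
        |f q - f p| / ((q:ℝ) - p) ≤
          π * Real.sqrt (1 - (sInf ((fun t => |f t|) '' Icc (p:ℝ) (q:ℝ))) ^ 2) + 1 / k) :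
    ∃ g : ℝ → ℝ, IntervalIntegrable g volume 0 1 ∧
      (∀ t ∈ Icc (0:ℝ) 1, f t = f 0 + ∫ s in (0:ℝ)..t, g s) ∧
      ∀ᵐ t ∂(volume : Measure ℝ), t ∈ Icc (0:ℝ) 1 →
        |g t| ≤ π * Real.sqrt (1 - (f t) ^ 2) :=
  stmt_13_general f hcont hdq
end

section
/- Let y : [0,1] → [-1,1] be absolutely continuous with |y'(t)| ≤ π√(1 - y(t)²) a.e., and suppose y(0) = 1. Then y(t) = cos(πt) for all t ∈ [0,1] such that y remains ≥ -1, provided additionally y(1) = -1. -/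
/-!
The angle `θ = arccos ∘ y` is `π`-Lipschitz, because formally `|θ'| = |y'| / √(1 - y²) ≤ π`.
Since `arccos` is not Lipschitz near `±1`, this is proved for `v ↦ arccos (v / c)` with `c > 1`,
which is Lipschitz on `[-1, 1]`, so that its composite with `y` is absolutely continuous and
the fundamental theorem of calculus applies; then `c → 1`. A `π`-Lipschitz `θ` with `θ 0 = 0`
and `θ 1 = π` must be `θ t = π t`, i.e. `y t = cos (π t)`.
-/

open Real MeasureTheory Set Filter Topology

open scoped NNReal

variable {a b : ℝ}

theorem LipschitzOnWith.comp_absolutelyContinuousOnInterval {X Y : Type*} [PseudoMetricSpace X]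
    [PseudoMetricSpace Y] {φ : X → Y} {s : Set X} {K : ℝ≥0} (hφ : LipschitzOnWith K φ s)
    {f : ℝ → X} (hf : AbsolutelyContinuousOnInterval f a b) (hfs : MapsTo f (uIcc a b) s) :
    AbsolutelyContinuousOnInterval (φ ∘ f) a b := by
  have hKf : Tendsto (fun E : ℕ × (ℕ → ℝ × ℝ) ↦ K * ∑ i ∈ Finset.range E.1,
      dist (f (E.2 i).1) (f (E.2 i).2))
      (AbsolutelyContinuousOnInterval.totalLengthFilter ⊓
        𝓟 (AbsolutelyContinuousOnInterval.disjWithin a b)) (𝓝 0) := by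
    simpa only [mul_zero] using Tendsto.const_mul (K : ℝ) hf
  refine squeeze_zero' (.of_forall fun E ↦ Finset.sum_nonneg fun i _ ↦ dist_nonneg) ?_ hKf
  filter_upwards [eventually_inf_principal.mpr (.of_forall fun E hE ↦ hE)] with E hE
  rw [Finset.mul_sum]
  exact Finset.sum_le_sum fun i hi ↦
    hφ.dist_le_mul _ (hfs (hE.1 i hi).1) _ (hfs (hE.1 i hi).2)

theorem AbsolutelyContinuousOnInterval.abs_sub_le_of_ae_abs_deriv_le {f : ℝ → ℝ} {L : ℝ}
    (hf : AbsolutelyContinuousOnInterval f a b) (h : ∀ᵐ x, x ∈ uIcc a b → |deriv f x| ≤ L) :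
    |f b - f a| ≤ L * |b - a| := by
  rw [← hf.integral_deriv_eq_sub, ← Real.norm_eq_abs]
  refine intervalIntegral.norm_integral_le_of_norm_le_const_ae ?_
  filter_upwards [h] with x hx hxab using hx (uIoc_subset_uIcc hxab)

theorem sqrt_one_sub_sq_le_mul_sqrt_one_sub_div_sq {c : ℝ} (hc : 1 ≤ c) (v : ℝ) :
    √(1 - v ^ 2) ≤ c * √(1 - (v / c) ^ 2) := by
  have hc0 : 0 < c := by linarith
  calc √(1 - v ^ 2) ≤ √(c ^ 2 * (1 - (v / c) ^ 2)) := by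
        refine sqrt_le_sqrt ?_
        rw [div_pow, mul_sub, mul_div_cancel₀ _ (by positivity)]
        nlinarith
    _ = c * √(1 - (v / c) ^ 2) := by rw [sqrt_mul (sq_nonneg c), sqrt_sq hc0.le]

theorem abs_arccos_div_sub_arccos_div_le {y : ℝ → ℝ} {L c : ℝ} (hL : 0 ≤ L) (hc : 1 < c)
    (hy : AbsolutelyContinuousOnInterval y a b) (hrange : MapsTo y (uIcc a b) (Icc (-1) 1))
    (hbound : ∀ᵐ x, x ∈ uIcc a b → |deriv y x| ≤ L * √(1 - y x ^ 2)) :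
    |arccos (y b / c) - arccos (y a / c)| ≤ L * |b - a| := by
  have hc0 : 0 < c := by linarith
  have hmem : ∀ v ∈ Icc (-1 : ℝ) 1, v / c ∈ Ioo (-1) 1 := fun v hv ↦
    ⟨by rw [lt_div_iff₀ hc0]; linarith [hv.1], by rw [div_lt_one hc0]; linarith [hv.2]⟩
  have hφ : ContDiffOn ℝ 1 (fun v ↦ arccos (v / c)) (Icc (-1) 1) := fun v hv ↦
    ((contDiffAt_arccos (hmem v hv).1.ne' (hmem v hv).2.ne).comp v
      (contDiffAt_id.div_const c)).contDiffWithinAt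
  obtain ⟨K, hK⟩ := hφ.exists_lipschitzOnWith one_ne_zero (convex_Icc _ _) isCompact_Icc
  refine (hK.comp_absolutelyContinuousOnInterval hy hrange).abs_sub_le_of_ae_abs_deriv_le ?_
  filter_upwards [hy.ae_differentiableAt, hbound] with x hdiff hbx hx
  have hyx := hmem _ (hrange hx)
  have hpos : 0 < √(1 - (y x / c) ^ 2) := sqrt_pos.2 (by nlinarith [hyx.1, hyx.2])
  have hderiv : HasDerivAt ((fun v ↦ arccos (v / c)) ∘ y)
      (-(1 / √(1 - (y x / c) ^ 2)) * (deriv y x / c)) x := by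
    have h := (hasDerivAt_arccos hyx.1.ne' hyx.2.ne).comp x ((hdiff hx).hasDerivAt.div_const c)
    exact h
  calc |deriv ((fun v ↦ arccos (v / c)) ∘ y) x|
      = |deriv y x| / (c * √(1 - (y x / c) ^ 2)) := by
        rw [hderiv.deriv, abs_mul, abs_neg, abs_div, abs_div, abs_one, abs_of_pos hpos,
          abs_of_pos hc0]
        field_simp
    _ ≤ L := by
      rw [div_le_iff₀ (by positivity)]
      exact (hbx hx).trans (mul_le_mul_of_nonneg_left
        (sqrt_one_sub_sq_le_mul_sqrt_one_sub_div_sq hc.le _) hL)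

theorem lipschitzOnWith_arccos_comp_of_ae_abs_deriv_le {y : ℝ → ℝ} {L : ℝ≥0}
    (hy : AbsolutelyContinuousOnInterval y a b) (hrange : MapsTo y (uIcc a b) (Icc (-1) 1))
    (hbound : ∀ᵐ x, x ∈ uIcc a b → |deriv y x| ≤ L * √(1 - y x ^ 2)) :
    LipschitzOnWith L (arccos ∘ y) (uIcc a b) := by
  refine LipschitzOnWith.of_dist_le_mul fun v hv u hu ↦ ?_
  have hsub : uIcc u v ⊆ uIcc a b := uIcc_subset_uIcc hu hv
  have hcont : ContinuousAt (fun c ↦ |arccos (y v / c) - arccos (y u / c)|) 1 := by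
    fun_prop (disch := norm_num)
  have hlim := hcont.tendsto.mono_left (nhdsWithin_le_nhds (s := Ioi 1))
  simp only [div_one] at hlim
  exact le_of_tendsto hlim (eventually_nhdsWithin_of_forall fun c hc ↦
    abs_arccos_div_sub_arccos_div_le L.2 hc (hy.mono hsub) (hrange.mono_left hsub)
      (hbound.mono fun x hx hxuv ↦ hx (hsub hxuv)))

theorem LipschitzOnWith.eq_of_sub_eq_mul {θ : ℝ → ℝ} {L : ℝ≥0}
    (hθ : LipschitzOnWith L θ (Icc a b))
    (hab : θ b - θ a = L * (b - a)) : EqOn θ (fun t ↦ θ a + L * (t - a)) (Icc a b) := by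
  intro t ht
  have hat : a ≤ b := ht.1.trans ht.2
  have hstart : θ t - θ a ≤ L * (t - a) := by
    have h := hθ.dist_le_mul t ht a ⟨le_rfl, hat⟩
    rw [Real.dist_eq, Real.dist_eq, abs_of_nonneg (sub_nonneg.2 ht.1)] at h
    exact (abs_le.1 h).2
  have hend : θ b - θ t ≤ L * (b - t) := by
    have h := hθ.dist_le_mul b ⟨hat, le_rfl⟩ t ht
    rw [Real.dist_eq, Real.dist_eq, abs_of_nonneg (sub_nonneg.2 ht.2)] at h
    exact (abs_le.1 h).2
  change θ t = θ a + L * (t - a)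
  linarith

theorem eq_cos_pi_mul_of_ae_abs_deriv_le {y : ℝ → ℝ}
    (hy : AbsolutelyContinuousOnInterval y 0 1)
    (hrange : MapsTo y (Icc 0 1) (Icc (-1) 1))
    (hbound : ∀ᵐ x, x ∈ Icc 0 1 → |deriv y x| ≤ π * √(1 - y x ^ 2))
    (h0 : y 0 = 1) (h1 : y 1 = -1) : EqOn y (fun t ↦ cos (π * t)) (Icc 0 1) := by
  have hI : uIcc (0 : ℝ) 1 = Icc 0 1 := uIcc_of_le zero_le_one
  have hθ := lipschitzOnWith_arccos_comp_of_ae_abs_deriv_le (L := NNReal.pi) hy (hI ▸ hrange)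
    (by simpa only [hI, NNReal.coe_real_pi] using hbound)
  rw [hI] at hθ
  intro t ht
  have harccos := hθ.eq_of_sub_eq_mul (by simp [h0, h1]) ht
  simp only [Function.comp_apply, h0, arccos_one, NNReal.coe_real_pi, sub_zero, zero_add]
    at harccos
  change y t = cos (π * t)
  rw [← harccos, cos_arccos (hrange ht).1 (hrange ht).2]

theorem stmt_15 (y g : ℝ → ℝ)
    (hrange : ∀ t ∈ Icc (0:ℝ) 1, y t ∈ Icc (-1:ℝ) 1)
    (hint : IntervalIntegrable g volume 0 1)
    (hAC : ∀ t ∈ Icc (0:ℝ) 1, y t = y 0 + ∫ s in (0:ℝ)..t, g s)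
    (hbound : ∀ᵐ t ∂(volume : Measure ℝ), t ∈ Icc (0:ℝ) 1 →
      |g t| ≤ π * Real.sqrt (1 - (y t) ^ 2))
    (h0 : y 0 = 1) (h1 : y 1 = -1) :
    ∀ t ∈ Icc (0:ℝ) 1, y t = Real.cos (π * t) := by
  set z : ℝ → ℝ := fun u ↦ 1 + ∫ s in (0:ℝ)..u, g s
  have hzy : EqOn z y (Icc 0 1) := fun u hu ↦ by rw [hAC u hu, h0]
  have hz : AbsolutelyContinuousOnInterval z 0 1 :=
    contDiffOn_const.absolutelyContinuousOnInterval.fun_add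
      (hint.absolutelyContinuousOnInterval_intervalIntegral (by simp))
  have hzbound : ∀ᵐ x, x ∈ Icc 0 1 → |deriv z x| ≤ π * √(1 - z x ^ 2) := by
    filter_upwards [hint.ae_hasDerivAt_integral, hbound] with x hderiv hbx hx
    rw [((hderiv (uIcc_of_le (zero_le_one' ℝ) ▸ hx) 0 (by simp)).const_add 1).deriv, hzy hx]
    exact hbx hx
  intro t ht
  rw [← hzy ht]
  exact eq_cos_pi_mul_of_ae_abs_deriv_le hz (fun u hu ↦ hzy hu ▸ hrange u hu) hzbound
    (by simp [z]) (hzy ⟨zero_le_one, le_rfl⟩ ▸ h1) ht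
end

section
/- Let f : [0,1] → ℝ satisfy |f(t) - f(s)| ≤ √8·|t-s|^{1/2} + ε_n for all s,t, with ε_n → 0, and let f_m be the piecewise-linear interpolation of f at points i/m. Then there exist sequences m(n) → ∞ and c_n → 0 such that f_{m(n)} is Hölder-1/2 with constant √8 + δ for any fixed δ > 0 and large n, and ‖f - f_{m(n)}‖_∞ ≤ c_n. -/
open Real Filter Set

/-!
Measure distances in units of the mesh `1/m`, so that the nodes are the integers and
`|g b - g a| ≤ K √(b - a) + ε` with `K = √8 / √m`. The increment of the interpolant between
`i + α` and `j + β` is the convex combination, with weights `(1-α or α)(1-β or β)`, of the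
node increments `g b - g a`, `a ∈ {i, i+1}`, `b ∈ {j, j+1}`. When `i < j` all of these have
`b ≥ a`, so concavity of `√` bounds it by `K √d + ε`, `d` the distance; for `d ≥ 1` the
additive `ε` is absorbed into `ε √d`. For `d < 1` the two points lie in one cell or in adjacent
cells, where the slopes are at most `K + ε` and `d ≤ √d`. Back in the original scale this is
Hölder-`1/2` with constant `√8 + ε √m`, and it remains to let `m → ∞` slowly enough that
`ε √m → 0`.
-/

/-- The piecewise-linear interpolation of `f` at the points `i/m`, `i = 0, …, m`. -/
noncomputable def linInterp (f : ℝ → ℝ) (m : ℕ) : ℝ → ℝ := fun t =>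
  f ((⌊t * m⌋₊ : ℝ) / m) +
    (t * m - ⌊t * m⌋₊) * (f (((⌊t * m⌋₊ : ℝ) + 1) / m) - f ((⌊t * m⌋₊ : ℝ) / m))

lemma abs_convex_comb_sub_le (a b c β : ℝ) (hβ₀ : 0 ≤ β) (hβ₁ : β ≤ 1) :
    |(1 - β) * a + β * b - c| ≤ (1 - β) * |a - c| + β * |b - c| := by
  calc |(1 - β) * a + β * b - c| = |(1 - β) * (a - c) + β * (b - c)| := by ring_nf
    _ ≤ |(1 - β) * (a - c)| + |β * (b - c)| := abs_add_le _ _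
    _ = (1 - β) * |a - c| + β * |b - c| := by
      rw [abs_mul, abs_mul, abs_of_nonneg (sub_nonneg.2 hβ₁), abs_of_nonneg hβ₀]

lemma convex_comb_sqrt_le {K ε u v β : ℝ} (hK : 0 ≤ K) (hu : 0 ≤ u) (hv : 0 ≤ v)
    (hβ₀ : 0 ≤ β) (hβ₁ : β ≤ 1) :
    (1 - β) * (K * √u + ε) + β * (K * √v + ε) ≤ K * √((1 - β) * u + β * v) + ε := by
  have hconc : (1 - β) * √u + β * √v ≤ √((1 - β) * u + β * v) :=
    strictConcaveOn_sqrt.concaveOn.2 hu hv (sub_nonneg.2 hβ₁) hβ₀ (by ring)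
  nlinarith [mul_le_mul_of_nonneg_left hconc hK]

def interp (g : ℕ → ℝ) (i : ℕ) (α : ℝ) : ℝ := (1 - α) * g i + α * g (i + 1)

section Interp

variable {g : ℕ → ℝ} {A K ε α β : ℝ} {i j m : ℕ}

lemma abs_interp_sub_interp_same_le (hg : |g (i + 1) - g i| ≤ A) (hαβ : α ≤ β) :
    |interp g i β - interp g i α| ≤ A * (β - α) := by
  have : interp g i β - interp g i α = (β - α) * (g (i + 1) - g i) := by
    unfold interp; ring
  rw [this, abs_mul, abs_of_nonneg (sub_nonneg.2 hαβ), mul_comm]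
  exact mul_le_mul_of_nonneg_right hg (sub_nonneg.2 hαβ)

lemma abs_interp_succ_sub_interp_le (hg₀ : |g (i + 1) - g i| ≤ A)
    (hg₁ : |g (i + 2) - g (i + 1)| ≤ A) (hα₁ : α ≤ 1) (hβ₀ : 0 ≤ β) :
    |interp g (i + 1) β - interp g i α| ≤ A * (1 - α + β) := by
  have : interp g (i + 1) β - interp g i α
      = β * (g (i + 2) - g (i + 1)) + (1 - α) * (g (i + 1) - g i) := by
    unfold interp; ring
  rw [this]
  calc _ ≤ |β * (g (i + 2) - g (i + 1))| + |(1 - α) * (g (i + 1) - g i)| := abs_add_le _ _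
    _ ≤ β * A + (1 - α) * A := by
      rw [abs_mul, abs_mul, abs_of_nonneg hβ₀, abs_of_nonneg (sub_nonneg.2 hα₁)]
      gcongr
    _ = A * (1 - α + β) := by ring

variable (hK : 0 ≤ K) (hg : ∀ a b, a ≤ b → b ≤ m → |g b - g a| ≤ K * √((b : ℝ) - a) + ε)
include hK hg

lemma abs_interp_sub_le_of_le (hβ₀ : 0 ≤ β) (hβ₁ : β ≤ 1) {a : ℕ} (ha : a ≤ j) (hj : j + 1 ≤ m) :
    |interp g j β - g a| ≤ K * √(j + β - a) + ε := by
  have haj : (a : ℝ) ≤ j := by exact_mod_cast ha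
  calc |interp g j β - g a| ≤ (1 - β) * |g j - g a| + β * |g (j + 1) - g a| :=
        abs_convex_comb_sub_le _ _ _ _ hβ₀ hβ₁
    _ ≤ (1 - β) * (K * √((j : ℝ) - a) + ε) + β * (K * √((j : ℝ) + 1 - a) + ε) := by
        gcongr
        · exact hg a j ha (by omega)
        · exact_mod_cast hg a (j + 1) (by omega) hj
    _ ≤ K * √((1 - β) * ((j : ℝ) - a) + β * ((j : ℝ) + 1 - a)) + ε :=
        convex_comb_sqrt_le hK (by linarith) (by linarith) hβ₀ hβ₁
    _ = K * √(j + β - a) + ε := by ring_nf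

lemma abs_interp_sub_interp_le_of_succ_le (hα₀ : 0 ≤ α) (hα₁ : α ≤ 1) (hβ₀ : 0 ≤ β)
    (hβ₁ : β ≤ 1) (hij : i + 1 ≤ j) (hj : j + 1 ≤ m) :
    |interp g j β - interp g i α| ≤ K * √(j + β - (i + α)) + ε := by
  have hij' : (i : ℝ) + 1 ≤ j := by exact_mod_cast hij
  calc |interp g j β - interp g i α|
      ≤ (1 - α) * |g i - interp g j β| + α * |g (i + 1) - interp g j β| := by
        rw [abs_sub_comm]; exact abs_convex_comb_sub_le _ _ _ _ hα₀ hα₁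
    _ ≤ (1 - α) * (K * √(j + β - i) + ε) + α * (K * √(j + β - (i + 1 : ℕ)) + ε) := by
        rw [abs_sub_comm, abs_sub_comm (g (i + 1))]
        gcongr
        · exact abs_interp_sub_le_of_le hK hg hβ₀ hβ₁ (by omega) hj
        · exact abs_interp_sub_le_of_le hK hg hβ₀ hβ₁ hij hj
    _ ≤ K * √((1 - α) * (j + β - i) + α * (j + β - (i + 1 : ℕ))) + ε := by
        refine convex_comb_sqrt_le hK ?_ ?_ hα₀ hα₁ <;> push_cast <;> linarith
    _ = K * √(j + β - (i + α)) + ε := by push_cast; ring_nf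

lemma abs_interp_sub_interp_le_mul_sqrt (hε : 0 ≤ ε) (hα₀ : 0 ≤ α) (hα₁ : α ≤ 1)
    (hβ₀ : 0 ≤ β) (hβ₁ : β ≤ 1) (hij : i ≤ j) (hj : j + 1 ≤ m) (hαβ : i + α ≤ j + β) :
    |interp g j β - interp g i α| ≤ (K + ε) * √(j + β - (i + α)) := by
  have hslope : ∀ k, k + 1 ≤ m → |g (k + 1) - g k| ≤ K + ε := fun k hk => by
    simpa using hg k (k + 1) (by omega) hk
  have hd₀ : 0 ≤ (j : ℝ) + β - (i + α) := by linarith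
  have hshort : (j : ℝ) + β - (i + α) ≤ 1 →
      (K + ε) * (j + β - (i + α)) ≤ (K + ε) * √(j + β - (i + α)) := fun hd =>
    mul_le_mul_of_nonneg_left (le_sqrt_self_iff.2 hd) (by positivity)
  rcases hij.eq_or_lt with rfl | hij
  · calc _ ≤ (K + ε) * (β - α) := abs_interp_sub_interp_same_le (hslope i hj) (by linarith)
      _ = (K + ε) * (i + β - (i + α)) := by ring
      _ ≤ _ := hshort (by linarith)
  have hij' : (i : ℝ) + 1 ≤ j := by exact_mod_cast hij
  rcases le_or_gt 1 ((j : ℝ) + β - (i + α)) with hd | hd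
  · calc _ ≤ K * √(j + β - (i + α)) + ε :=
          abs_interp_sub_interp_le_of_succ_le hK hg hα₀ hα₁ hβ₀ hβ₁ hij hj
      _ ≤ K * √(j + β - (i + α)) + ε * √(j + β - (i + α)) := by
          gcongr; exact le_mul_of_one_le_right hε (one_le_sqrt.2 hd)
      _ = (K + ε) * √(j + β - (i + α)) := by ring
  · obtain rfl : j = i + 1 := by
      have : (j : ℝ) < i + 2 := by linarith
      have : j < i + 2 := by exact_mod_cast this
      omega
    calc _ ≤ (K + ε) * (1 - α + β) :=
          abs_interp_succ_sub_interp_le (hslope i (by omega)) (hslope (i + 1) hj) hα₁ hβ₀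
      _ = (K + ε) * ((i + 1 : ℕ) + β - (i + α)) := by push_cast; ring
      _ ≤ _ := hshort hd.le

end Interp

lemma exists_linInterp_eq_interp (f : ℝ → ℝ) {m : ℕ} (hm : 1 ≤ m) {t : ℝ}
    (ht : t ∈ Icc (0 : ℝ) 1) :
    ∃ i : ℕ, ∃ α : ℝ, 0 ≤ α ∧ α ≤ 1 ∧ i + 1 ≤ m ∧ t * m = i + α ∧
      linInterp f m t = interp (fun k => f (k / m)) i α := by
  have hm₀ : (0 : ℝ) < m := by exact_mod_cast hm
  rcases ht.2.lt_or_eq with ht₁ | rfl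
  · have htm : 0 ≤ t * m := mul_nonneg ht.1 hm₀.le
    refine ⟨⌊t * m⌋₊, t * m - ⌊t * m⌋₊, sub_nonneg.2 (Nat.floor_le htm),
      by linarith [Nat.lt_floor_add_one (t * m)], ?_, by ring, ?_⟩
    · have : t * m < m := by nlinarith
      have := (Nat.floor_lt htm).2 this
      omega
    · simp only [linInterp, interp]; push_cast; ring
  · refine ⟨m - 1, 1, zero_le_one, le_rfl, by omega, by push_cast [Nat.cast_sub hm]; ring, ?_⟩
    simp only [linInterp, interp, one_mul, Nat.floor_natCast, Nat.sub_add_cancel hm]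
    push_cast [Nat.cast_sub hm]
    ring_nf

section Holder

variable {f : ℝ → ℝ} {C ε : ℝ} {m : ℕ} (hm : 1 ≤ m)
  (hf : ∀ s ∈ Icc (0 : ℝ) 1, ∀ t ∈ Icc (0 : ℝ) 1, |f t - f s| ≤ C * √|t - s| + ε)
include hm hf

lemma abs_grid_sub_le (a b : ℕ) (hab : a ≤ b) (hb : b ≤ m) :
    |f (b / m) - f (a / m)| ≤ C / √m * √((b : ℝ) - a) + ε := by
  have hm₀ : (0 : ℝ) < m := by exact_mod_cast hm
  have hmem : ∀ k : ℕ, k ≤ m → (k / m : ℝ) ∈ Icc (0 : ℝ) 1 := fun k hk =>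
    ⟨by positivity, (div_le_one hm₀).2 (by exact_mod_cast hk)⟩
  have hba : (0 : ℝ) ≤ b - a := sub_nonneg.2 (by exact_mod_cast hab)
  calc |f (b / m) - f (a / m)| ≤ C * √|(b / m : ℝ) - a / m| + ε :=
        hf _ (hmem a (hab.trans hb)) _ (hmem b hb)
    _ = C / √m * √((b : ℝ) - a) + ε := by
      rw [← sub_div, abs_of_nonneg (div_nonneg hba hm₀.le), sqrt_div hba]; ring

lemma abs_linInterp_sub_le (hC : 0 ≤ C) (hε : 0 ≤ ε)
    {s t : ℝ} (hs : s ∈ Icc (0 : ℝ) 1) (ht : t ∈ Icc (0 : ℝ) 1) :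
    |linInterp f m t - linInterp f m s| ≤ (C + ε * √m) * √|t - s| := by
  wlog hst : s < t generalizing s t
  · rcases (not_lt.1 hst).eq_or_lt with rfl | hts
    · simp
    · rw [abs_sub_comm, abs_sub_comm t]; exact this ht hs hts
  have hm₀ : (0 : ℝ) < m := by exact_mod_cast hm
  obtain ⟨i, α, hα₀, hα₁, -, hsi, hLs⟩ := exists_linInterp_eq_interp f hm hs
  obtain ⟨j, β, hβ₀, hβ₁, hj, htj, hLt⟩ := exists_linInterp_eq_interp f hm ht
  have hαβ : (i : ℝ) + α < j + β := by rw [← hsi, ← htj]; gcongr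
  have hij : i ≤ j := by
    have : (i : ℝ) < j + 1 := by linarith
    exact Nat.lt_succ_iff.1 (by exact_mod_cast this)
  rw [hLs, hLt]
  calc _ ≤ (C / √m + ε) * √(j + β - (i + α)) :=
        abs_interp_sub_interp_le_mul_sqrt (by positivity) (abs_grid_sub_le hm hf) hε
          hα₀ hα₁ hβ₀ hβ₁ hij hj hαβ.le
    _ = (C + ε * √m) * √|t - s| := by
        rw [← hsi, ← htj, ← sub_mul, abs_of_pos (sub_pos.2 hst), sqrt_mul (sub_pos.2 hst).le]
        field_simp

lemma abs_sub_linInterp_le (hC : 0 ≤ C) {t : ℝ} (ht : t ∈ Icc (0 : ℝ) 1) :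
    |f t - linInterp f m t| ≤ C / √m + ε := by
  have hm₀ : (0 : ℝ) < m := by exact_mod_cast hm
  obtain ⟨i, α, hα₀, hα₁, hi, hti, hLt⟩ := exists_linInterp_eq_interp f hm ht
  have hnode : ∀ k : ℕ, k ≤ m → |(k : ℝ) - t * m| ≤ 1 → |f (k / m) - f t| ≤ C / √m + ε := by
    intro k hk hkt
    have hkm : (k / m : ℝ) ∈ Icc (0 : ℝ) 1 :=
      ⟨by positivity, (div_le_one hm₀).2 (by exact_mod_cast hk)⟩
    have hdist : |(k / m : ℝ) - t| ≤ 1 / m := by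
      rw [show (k / m : ℝ) - t = (k - t * m) / m by field_simp, abs_div, abs_of_pos hm₀]
      gcongr
    calc |f (k / m) - f t| ≤ C * √|(k / m : ℝ) - t| + ε := hf t ht _ hkm
      _ ≤ C * √(1 / m) + ε := by gcongr
      _ = C / √m + ε := by rw [sqrt_div' _ hm₀.le, sqrt_one]; ring
  rw [hLt, abs_sub_comm]
  calc _ ≤ (1 - α) * |f (i / m) - f t| + α * |f ((i + 1 : ℕ) / m) - f t| :=
        abs_convex_comb_sub_le _ _ _ _ hα₀ hα₁
    _ ≤ (1 - α) * (C / √m + ε) + α * (C / √m + ε) := by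
        gcongr
        · exact hnode i (by omega) (by rw [hti, abs_le]; constructor <;> linarith)
        · exact hnode (i + 1) hi (by rw [hti, abs_le]; push_cast; constructor <;> linarith)
    _ = C / √m + ε := by ring

end Holder

lemma exists_tendsto_atTop_mul_sqrt_tendsto_zero {ε : ℕ → ℝ} (hε : Tendsto ε atTop (nhds 0))
    (hε₀ : ∀ n, 0 ≤ ε n) :
    ∃ m : ℕ → ℕ, (∀ n, 1 ≤ m n) ∧ Tendsto m atTop atTop ∧
      Tendsto (fun n => ε n * √(m n)) atTop (nhds 0) := by
  -- `m ≈ 1 / b` with `ε ≤ b` gives `ε² m ≤ b + b²`; the term `1 / (n + 1)` keeps `b` positive.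
  set b : ℕ → ℝ := fun n => ε n + 1 / (n + 1)
  have hb₀ : ∀ n, 0 < b n := fun n => by have := hε₀ n; positivity
  have hb : Tendsto b atTop (nhds 0) := by
    simpa [b] using hε.add tendsto_one_div_add_atTop_nhds_zero_nat
  refine ⟨fun n => ⌈(b n)⁻¹⌉₊, fun n => Nat.one_le_iff_ne_zero.2 ?_, ?_, ?_⟩
  · exact (Nat.ceil_pos.2 (inv_pos.2 (hb₀ n))).ne'
  · refine tendsto_natCast_atTop_iff.1 (tendsto_atTop_mono (fun n => Nat.le_ceil _) ?_)
    exact tendsto_inv_nhdsGT_zero.comp (tendsto_nhdsWithin_iff.2 ⟨hb, .of_forall hb₀⟩)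
  · have hsq : Tendsto (fun n => ε n ^ 2 * ⌈(b n)⁻¹⌉₊) atTop (nhds 0) := by
      refine squeeze_zero (fun n => by positivity) (fun n => ?_) (by simpa using hb.add (hb.pow 2))
      calc ε n ^ 2 * ⌈(b n)⁻¹⌉₊ ≤ b n ^ 2 * ((b n)⁻¹ + 1) := by
            gcongr
            · exact hε₀ n
            · linarith [one_div_pos.2 (show (0 : ℝ) < n + 1 by positivity)]
            · exact (Nat.ceil_lt_add_one (inv_pos.2 (hb₀ n)).le).le
        _ = b n + b n ^ 2 := by have := (hb₀ n).ne'; field_simp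
    simpa [sqrt_mul (sq_nonneg _), sqrt_sq (hε₀ _)] using hsq.sqrt

theorem stmt_19 (f : ℕ → ℝ → ℝ) (ε : ℕ → ℝ)
    (hε : Tendsto ε atTop (nhds 0))
    (hf : ∀ n, ∀ s ∈ Icc (0:ℝ) 1, ∀ t ∈ Icc (0:ℝ) 1,
      |f n t - f n s| ≤ Real.sqrt 8 * Real.sqrt |t - s| + ε n) :
    ∃ (m : ℕ → ℕ) (c : ℕ → ℝ), Tendsto m atTop atTop ∧ Tendsto c atTop (nhds 0) ∧
      (∀ δ : ℝ, 0 < δ → ∃ N : ℕ, ∀ n ≥ N, ∀ s ∈ Icc (0:ℝ) 1, ∀ t ∈ Icc (0:ℝ) 1,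
        |linInterp (f n) (m n) t - linInterp (f n) (m n) s| ≤
          (Real.sqrt 8 + δ) * Real.sqrt |t - s|) ∧
      ∀ n, ∀ t ∈ Icc (0:ℝ) 1, |f n t - linInterp (f n) (m n) t| ≤ c n := by
  have hε₀ : ∀ n, 0 ≤ ε n := fun n => by
    simpa using hf n 0 ⟨le_rfl, zero_le_one⟩ 0 ⟨le_rfl, zero_le_one⟩
  obtain ⟨m, hm₁, hm, hεm⟩ := exists_tendsto_atTop_mul_sqrt_tendsto_zero hε hε₀
  refine ⟨m, fun n => √8 / √(m n) + ε n, hm, ?_, fun δ hδ => ?_,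
    fun n t ht => abs_sub_linInterp_le (hm₁ n) (hf n) (sqrt_nonneg 8) ht⟩
  · have hsqrt_m : Tendsto (fun n => √(m n : ℝ)) atTop atTop :=
      tendsto_sqrt_atTop.comp (tendsto_natCast_atTop_atTop.comp hm)
    simpa using (tendsto_const_nhds.div_atTop hsqrt_m).add hε
  · obtain ⟨N, hN⟩ := eventually_atTop.1 (hεm.eventually (eventually_le_nhds hδ))
    refine ⟨N, fun n hn s hs t ht => ?_⟩
    calc _ ≤ (√8 + ε n * √(m n)) * √|t - s| :=
          abs_linInterp_sub_le (hm₁ n) (hf n) (sqrt_nonneg 8) (hε₀ n) hs ht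
      _ ≤ (√8 + δ) * √|t - s| := by gcongr; exact hN n hn
end
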